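/- Fix r ≥ 1 and a sequence (γ_n)_{n∈ℕ} of nonzero complex numbers. Let H be the infinite matrix with H_{n,n+1} = 1 and H_{n+r,n} = γ_n for all n ∈ ℕ, and all other entries equal to 0. Then there exists no sequence (α_n)_{n∈ℕ} of complex numbers such that H = L_1 ⋯ L_r U entrywise, where L_1,…,L_r, U are the bidiagonal matrices built from (α_n). -/

import Mathlib

/-!
The first column of `U` is `α₀ e₀`, so the first column of `L₁ ⋯ L_r U` is `α₀` times the first
column of `L₁ ⋯ L_r`, whose `(0,0)` entry is `1` because every `L_k` has first row `e₀ᵀ`.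
Hence the product has `(0,0)` entry `α₀`. Since `r ≥ 1`, the prescribed `H` has `H₀₀ = 0`, so
`α₀ = 0` and the whole first column of the product vanishes, contradicting `H_{r,0} = γ₀ ≠ 0`.
-/

open Finset

noncomputable section

/-- The upper-bidiagonal matrix `U`: `U_{n,n} = α_{(r+1)n}`, `U_{n,n+1} = 1`. -/
def Umat (r : ℕ) (α : ℕ → ℂ) : ℕ → ℕ → ℂ := fun n ℓ =>
  if ℓ = n then α ((r + 1) * n) else if ℓ = n + 1 then 1 else 0

/-- The lower-bidiagonal matrix `L_k`: `(L_k)_{n,n} = 1`, `(L_k)_{n+1,n} = α_{(r+1)n+k}`. -/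
def Lmat (r k : ℕ) (α : ℕ → ℂ) : ℕ → ℕ → ℂ := fun n ℓ =>
  if ℓ = n then 1 else if n = ℓ + 1 then α ((r + 1) * ℓ + k) else 0

/-- Entrywise product (finite sum, as the left factors have row `n`
supported in columns `< n+2`). -/
def bidMul (X Y : ℕ → ℕ → ℂ) : ℕ → ℕ → ℂ := fun n ℓ =>
  ∑ k ∈ Finset.range (n + 2), X n k * Y k ℓ

/-- Product of a list of such matrices. -/
def listProd : List (ℕ → ℕ → ℂ) → ℕ → ℕ → ℂ
  | [] => fun n ℓ => if n = ℓ then 1 else 0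
  | X :: rest => bidMul X (listProd rest)

/-- The Hessenberg matrix `H = L_1 ⋯ L_r U`. -/
def Hprod (r : ℕ) (α : ℕ → ℂ) : ℕ → ℕ → ℂ :=
  listProd (((List.range' 1 r).map fun k => Lmat r k α) ++ [Umat r α])

lemma Umat_col_zero (r : ℕ) (α : ℕ → ℂ) (k : ℕ) :
    Umat r α k 0 = if k = 0 then α 0 else 0 := by
  rcases eq_or_ne k 0 with rfl | hk
  · simp [Umat]
  · simp [Umat, hk, Ne.symm hk]

lemma Lmat_row_zero (r k : ℕ) (α : ℕ → ℂ) (m : ℕ) :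
    Lmat r k α 0 m = if m = 0 then 1 else 0 := by
  rcases eq_or_ne m 0 with rfl | hm
  · simp [Lmat]
  · simp [Lmat, hm]

lemma listProd_append_col_zero (Xs : List (ℕ → ℕ → ℂ)) (Y : ℕ → ℕ → ℂ) (c : ℂ)
    (hY : ∀ k, Y k 0 = if k = 0 then c else 0) (n : ℕ) :
    listProd (Xs ++ [Y]) n 0 = listProd Xs n 0 * c := by
  induction Xs generalizing n with
  | nil =>
    simp only [List.nil_append, listProd, bidMul, hY, mul_ite, mul_zero,
      Finset.sum_ite_eq', Finset.mem_range]
    rcases eq_or_ne n 0 with rfl | hn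
    · simp
    · simp [hn]
  | cons X Xs ih =>
    simp only [List.cons_append, listProd, bidMul, ih, Finset.sum_mul, mul_assoc]

lemma listProd_zero_zero (Xs : List (ℕ → ℕ → ℂ))
    (h : ∀ X ∈ Xs, ∀ m, X 0 m = if m = 0 then 1 else 0) :
    listProd Xs 0 0 = 1 := by
  induction Xs with
  | nil => simp [listProd]
  | cons X Xs ih =>
    simp only [listProd, bidMul, h X List.mem_cons_self, ite_mul, one_mul, zero_mul,
      Finset.sum_ite_eq', Finset.mem_range]
    simpa using ih fun Y hY => h Y (List.mem_cons_of_mem _ hY)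

lemma Hprod_col_zero (r : ℕ) (α : ℕ → ℂ) (n : ℕ) :
    Hprod r α n 0 = listProd ((List.range' 1 r).map fun k => Lmat r k α) n 0 * α 0 :=
  listProd_append_col_zero _ _ _ (Umat_col_zero r α) n

lemma Hprod_zero_zero (r : ℕ) (α : ℕ → ℂ) : Hprod r α 0 0 = α 0 := by
  rw [Hprod_col_zero, listProd_zero_zero, one_mul]
  simp only [List.mem_map]
  rintro _ ⟨k, -, rfl⟩
  exact Lmat_row_zero r k α

lemma Hprod_col_zero_eq_zero (r : ℕ) (α : ℕ → ℂ) (h : Hprod r α 0 0 = 0) (n : ℕ) :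
    Hprod r α n 0 = 0 := by
  rw [Hprod_zero_zero] at h
  rw [Hprod_col_zero, h, mul_zero]

/-- The recurrence matrix of an `(r+1)`-fold symmetric `r`-orthogonal
polynomial sequence (`H_{n,n+1} = 1`, `H_{n+r,n} = γ_n`, other entries `0`)
admits no bidiagonal factorisation `H = L_1 ⋯ L_r U`. -/
theorem stmt11 (r : ℕ) (hr : 1 ≤ r) (γ : ℕ → ℂ) (hγ : ∀ n, γ n ≠ 0) :
    ¬ ∃ α : ℕ → ℂ, ∀ n ℓ,
      (if ℓ = n + 1 then (1 : ℂ) else if n = ℓ + r then γ ℓ else 0)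
        = Hprod r α n ℓ := by
  rintro ⟨α, hα⟩
  have h00 : Hprod r α 0 0 = 0 := by
    rw [← hα 0 0, if_neg (by omega), if_neg (by omega)]
  have hr0 : Hprod r α r 0 = γ 0 := by
    rw [← hα r 0, if_neg (by omega), if_pos (by omega)]
  exact hγ 0 (hr0 ▸ Hprod_col_zero_eq_zero r α h00 r)
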